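/- arXiv:2302.03138 — 4 statements merged into one kernel-verified Lean document; each statement's English description precedes it below -/
import Mathlib

section
/- Let P be a symmetric positive semidefinite n×n real matrix, D a real n×m matrix, and R a symmetric positive definite m×m real matrix. Then R + DᵀPD is positive definite, and the matrix P − P D (R + DᵀPD)⁻¹ Dᵀ P is positive semidefinite. -/
open Matrix

theorem stmt1 {n m : ℕ} (P : Matrix (Fin n) (Fin n) ℝ) (D : Matrix (Fin n) (Fin m) ℝ)
    (R : Matrix (Fin m) (Fin m) ℝ) (hP : P.PosSemidef) (hR : R.PosDef) :
    (R + Dᵀ * P * D).PosDef ∧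
      (P - P * D * (R + Dᵀ * P * D)⁻¹ * Dᵀ * P).PosSemidef := by
  have hDT : Dᴴ = Dᵀ := conjTranspose_eq_transpose_of_trivial D
  have hSemi : (Dᵀ * P * D).PosSemidef := by
    simpa [hDT] using hP.conjTranspose_mul_mul_same D
  have hS : (R + Dᵀ * P * D).PosDef := hR.add_posSemidef hSemi
  refine ⟨hS, ?_⟩
  haveI := hS.isUnit.invertible
  have key := (PosDef.fromBlocks₁₁ (Dᵀ * P) P hS).mp
  have hPT : Pᵀ = P := by
    rw [← conjTranspose_eq_transpose_of_trivial, hP.isHermitian.eq]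
  have hBH : (Dᵀ * P)ᴴ = P * D := by
    rw [conjTranspose_eq_transpose_of_trivial, transpose_mul, transpose_transpose, hPT]
  rw [hBH] at key
  have h1 : ((fromCols D (1 : Matrix (Fin n) (Fin n) ℝ))ᴴ * P *
      fromCols D 1).PosSemidef := hP.conjTranspose_mul_mul_same _
  have h2 : ((fromRows (1 : Matrix (Fin m) (Fin m) ℝ) (0 : Matrix (Fin n) (Fin m) ℝ)) * R *
      (fromRows (1 : Matrix (Fin m) (Fin m) ℝ) (0 : Matrix (Fin n) (Fin m) ℝ))ᴴ).PosSemidef :=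
    hR.posSemidef.mul_mul_conjTranspose_same _
  have e1 : (fromCols D (1 : Matrix (Fin n) (Fin n) ℝ))ᴴ * P * fromCols D 1 =
      fromBlocks (Dᵀ * P * D) (Dᵀ * P) (P * D) P := by
    rw [conjTranspose_fromCols_eq_fromRows_conjTranspose, fromRows_mul,
      fromRows_mul_fromCols, hDT, conjTranspose_eq_transpose_of_trivial]
    simp [hPT, Matrix.one_mul, Matrix.mul_one]
  have e2 : (fromRows (1 : Matrix (Fin m) (Fin m) ℝ) (0 : Matrix (Fin n) (Fin m) ℝ)) * R *
      (fromRows (1 : Matrix (Fin m) (Fin m) ℝ) (0 : Matrix (Fin n) (Fin m) ℝ))ᴴ =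
      fromBlocks R 0 0 0 := by
    rw [conjTranspose_fromRows_eq_fromCols_conjTranspose, fromRows_mul,
      fromRows_mul_fromCols]
    simp
  rw [e1] at h1; rw [e2] at h2
  have hsum := h1.add h2
  rw [fromBlocks_add] at hsum
  simp only [add_zero] at hsum
  have : Dᵀ * P * D + R = R + Dᵀ * P * D := add_comm _ _
  rw [this] at hsum
  have := key hsum
  simpa [Matrix.mul_assoc, sub_eq_iff_eq_add] using this
end

section
/- Let R̂ be a symmetric positive definite m×m real matrix, let D̂ and B̂ be real n×m matrices, let P₁, P₂, Π be symmetric positive semidefinite n×n real matrices, and let τ ≥ 0. Then both R̂ + D̂ᵀP₁D̂ and R̂ + D̂ᵀP₂D̂ + τ B̂ᵀΠB̂ are positive definite, and ‖(R̂ + D̂ᵀP₁D̂)⁻¹ − (R̂ + D̂ᵀP₂D̂ + τ B̂ᵀΠB̂)⁻¹‖ ≤ ‖R̂⁻¹‖² · ( ‖D̂‖² ‖P₁ − P₂‖ + τ ‖B̂‖² ‖Π‖ ), where ‖·‖ denotes the spectral norm. -/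
open Matrix
open scoped Matrix.Norms.L2Operator

/-- The spectral norm of a real matrix: the operator norm induced by the Euclidean norms. -/
noncomputable def sNorm {p q : ℕ} (M : Matrix (Fin p) (Fin q) ℝ) : ℝ :=
  ‖LinearMap.toContinuousLinearMap (Matrix.toEuclideanLin M)‖

lemma sNorm_eq {p q : ℕ} (M : Matrix (Fin p) (Fin q) ℝ) : sNorm M = ‖M‖ := rfl

lemma ct_eq {p q : ℕ} (M : Matrix (Fin p) (Fin q) ℝ) : Mᴴ = Mᵀ := by
  ext i j; simp [conjTranspose_apply]

lemma dot_nonneg {k : ℕ} {S : Matrix (Fin k) (Fin k) ℝ} (hS : S.PosSemidef)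
    (x : Fin k → ℝ) : 0 ≤ x ⬝ᵥ S *ᵥ x := by
  simpa using hS.dotProduct_mulVec_nonneg x

lemma dot_symm {k : ℕ} {S : Matrix (Fin k) (Fin k) ℝ} (hS : Sᵀ = S)
    (x y : Fin k → ℝ) : x ⬝ᵥ S *ᵥ y = y ⬝ᵥ S *ᵥ x := by
  rw [dotProduct_comm, dotProduct_mulVec, ← mulVec_transpose, hS]

lemma dot_CS {k : ℕ} {S : Matrix (Fin k) (Fin k) ℝ} (hS : S.PosSemidef)
    (x y : Fin k → ℝ) : (x ⬝ᵥ S *ᵥ y) ^ 2 ≤ (x ⬝ᵥ S *ᵥ x) * (y ⬝ᵥ S *ᵥ y) := by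
  have hs : Sᵀ = S := by rw [← ct_eq]; exact hS.isHermitian
  have h : ∀ t : ℝ, 0 ≤ (y ⬝ᵥ S *ᵥ y) * (t * t) + (2 * (x ⬝ᵥ S *ᵥ y)) * t + (x ⬝ᵥ S *ᵥ x) := by
    intro t
    have h0 := dot_nonneg hS (x + t • y)
    have hxy : y ⬝ᵥ S *ᵥ x = x ⬝ᵥ S *ᵥ y := dot_symm hs y x
    simp only [mulVec_add, mulVec_smul, dotProduct_add, add_dotProduct, dotProduct_smul,
      smul_dotProduct, smul_eq_mul] at h0
    rw [hxy] at h0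
    nlinarith [h0]
  have hd := discrim_le_zero h
  rw [discrim] at hd
  nlinarith [hd]

lemma norm_le_of_forms {k : ℕ} {S : Matrix (Fin k) (Fin k) ℝ} (hS : S.PosSemidef)
    {c : ℝ} (hc : 0 ≤ c) (h : ∀ x : Fin k → ℝ, x ⬝ᵥ S *ᵥ x ≤ c * (x ⬝ᵥ x)) :
    sNorm S ≤ c := by
  refine ContinuousLinearMap.opNorm_le_bound _ hc fun v => ?_
  set x : Fin k → ℝ := WithLp.equiv 2 _ v with hx
  set w : Fin k → ℝ := S *ᵥ x with hw
  have hSv : ‖(LinearMap.toContinuousLinearMap (Matrix.toEuclideanLin S)) v‖ ^ 2 = w ⬝ᵥ w := by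
    rw [← real_inner_self_eq_norm_sq]
    rfl
  have hvsq : ‖v‖ ^ 2 = x ⬝ᵥ x := by
    rw [← real_inner_self_eq_norm_sq]; rfl
  have hs : Sᵀ = S := by rw [← ct_eq]; exact hS.isHermitian
  have hww : w ⬝ᵥ w = x ⬝ᵥ S *ᵥ w := by
    rw [hw, ← dot_symm hs, dotProduct_mulVec, ← mulVec_transpose, hs]
  have hcs := dot_CS hS x w
  have h1 : x ⬝ᵥ S *ᵥ x ≤ c * (x ⬝ᵥ x) := h x
  have h2 : w ⬝ᵥ S *ᵥ w ≤ c * (w ⬝ᵥ w) := h w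
  have hxnn : 0 ≤ x ⬝ᵥ x := by
    simpa [dotProduct] using Finset.sum_nonneg fun i _ => mul_self_nonneg (x i)
  have hwnn : 0 ≤ w ⬝ᵥ w := by
    simpa [dotProduct] using Finset.sum_nonneg fun i _ => mul_self_nonneg (w i)
  have hx1 : 0 ≤ x ⬝ᵥ S *ᵥ x := dot_nonneg hS x
  have hw1 : 0 ≤ w ⬝ᵥ S *ᵥ w := dot_nonneg hS w
  have key : w ⬝ᵥ w ≤ c ^ 2 * (x ⬝ᵥ x) := by
    rcases eq_or_lt_of_le hwnn with h0 | h0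
    · rw [← h0]; positivity
    · nlinarith [hcs, h1, h2, hww, mul_le_mul h1 h2 hw1 (by positivity : (0:ℝ) ≤ c * (x ⬝ᵥ x))]
  have hfin : ‖(LinearMap.toContinuousLinearMap (Matrix.toEuclideanLin S)) v‖ ^ 2
      ≤ (c * ‖v‖) ^ 2 := by
    rw [hSv]; nlinarith [key, hvsq]
  nlinarith [hfin, norm_nonneg ((LinearMap.toContinuousLinearMap (Matrix.toEuclideanLin S)) v),
    norm_nonneg v, mul_nonneg hc (norm_nonneg v)]

lemma dot_le_norm {k : ℕ} (M : Matrix (Fin k) (Fin k) ℝ) (x : Fin k → ℝ) :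
    x ⬝ᵥ M *ᵥ x ≤ sNorm M * (x ⬝ᵥ x) := by
  set v : EuclideanSpace ℝ (Fin k) := (WithLp.equiv 2 _).symm x with hv
  have h1 : x ⬝ᵥ M *ᵥ x
      = inner ℝ v ((LinearMap.toContinuousLinearMap (Matrix.toEuclideanLin M)) v) := by
    rw [EuclideanSpace.inner_eq_star_dotProduct]; simp [v, dotProduct_comm]
  have h2 : ‖(LinearMap.toContinuousLinearMap (Matrix.toEuclideanLin M)) v‖ ≤ sNorm M * ‖v‖ :=
    ContinuousLinearMap.le_opNorm _ v
  have h3 : ‖v‖ ^ 2 = x ⬝ᵥ x := by rw [← real_inner_self_eq_norm_sq]; rfl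
  calc x ⬝ᵥ M *ᵥ x ≤ ‖v‖ * ‖(LinearMap.toContinuousLinearMap (Matrix.toEuclideanLin M)) v‖ := by
        rw [h1]; exact real_inner_le_norm _ _
    _ ≤ ‖v‖ * (sNorm M * ‖v‖) := by
        exact mul_le_mul_of_nonneg_left h2 (norm_nonneg v)
    _ = sNorm M * (x ⬝ᵥ x) := by rw [← h3]; ring

lemma mulVec_dot {k : ℕ} (M : Matrix (Fin k) (Fin k) ℝ) (x z : Fin k → ℝ) :
    (M *ᵥ x) ⬝ᵥ z = x ⬝ᵥ Mᵀ *ᵥ z := by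
  rw [dotProduct_comm, dotProduct_mulVec, ← mulVec_transpose, dotProduct_comm]

lemma var_ineq {k : ℕ} {P : Matrix (Fin k) (Fin k) ℝ} (hP : P.PosDef)
    (x y : Fin k → ℝ) : 2 * (x ⬝ᵥ y) - y ⬝ᵥ P *ᵥ y ≤ x ⬝ᵥ P⁻¹ *ᵥ x := by
  have hdet : IsUnit P.det := (Matrix.isUnit_iff_isUnit_det P).mp hP.isUnit
  have hPs : Pᵀ = P := by rw [← ct_eq]; exact hP.isHermitian
  have hPinv : P⁻¹ᵀ = P⁻¹ := by rw [Matrix.transpose_nonsing_inv, hPs]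
  have h0 := dot_nonneg hP.posSemidef (y - P⁻¹ *ᵥ x)
  have e1 : P *ᵥ (P⁻¹ *ᵥ x) = x := by
    rw [mulVec_mulVec, Matrix.mul_nonsing_inv _ hdet, one_mulVec]
  have e2 : (P⁻¹ *ᵥ x) ⬝ᵥ (P *ᵥ y) = x ⬝ᵥ y := by
    rw [mulVec_dot, hPinv, mulVec_mulVec, Matrix.nonsing_inv_mul _ hdet, one_mulVec]
  have e3 : (P⁻¹ *ᵥ x) ⬝ᵥ x = x ⬝ᵥ P⁻¹ *ᵥ x := by
    rw [mulVec_dot, hPinv]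
  rw [Matrix.mulVec_sub, dotProduct_sub, sub_dotProduct, sub_dotProduct, e1] at h0
  rw [e2, e3] at h0
  have hyx : y ⬝ᵥ x = x ⬝ᵥ y := dotProduct_comm y x
  linarith [h0]

lemma inv_form_mono {k : ℕ} {P Q : Matrix (Fin k) (Fin k) ℝ} (hP : P.PosDef) (hQ : Q.PosDef)
    (h : ∀ x, x ⬝ᵥ P *ᵥ x ≤ x ⬝ᵥ Q *ᵥ x) (x : Fin k → ℝ) :
    x ⬝ᵥ Q⁻¹ *ᵥ x ≤ x ⬝ᵥ P⁻¹ *ᵥ x := by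
  have hdet : IsUnit Q.det := (Matrix.isUnit_iff_isUnit_det Q).mp hQ.isUnit
  have hQs : Qᵀ = Q := by rw [← ct_eq]; exact hQ.isHermitian
  have hQinv : Q⁻¹ᵀ = Q⁻¹ := by rw [Matrix.transpose_nonsing_inv, hQs]
  set y : Fin k → ℝ := Q⁻¹ *ᵥ x with hy
  have e1 : y ⬝ᵥ Q *ᵥ y = x ⬝ᵥ Q⁻¹ *ᵥ x := by
    rw [hy, mulVec_dot, hQinv, mulVec_mulVec, Matrix.nonsing_inv_mul _ hdet, one_mulVec]
  have e2 : x ⬝ᵥ y = x ⬝ᵥ Q⁻¹ *ᵥ x := rfl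
  have h1 := var_ineq hP x y
  have h2 := h y
  linarith [h1, h2, e1]

lemma inv_norm_le {k : ℕ} {P Q : Matrix (Fin k) (Fin k) ℝ} (hP : P.PosDef) (hQ : Q.PosDef)
    (h : ∀ x, x ⬝ᵥ P *ᵥ x ≤ x ⬝ᵥ Q *ᵥ x) : sNorm Q⁻¹ ≤ sNorm P⁻¹ := by
  refine norm_le_of_forms hQ.inv.posSemidef (by
    have := sNorm_eq (P⁻¹); exact (norm_nonneg P⁻¹).trans_eq this.symm) fun x => ?_
  exact (inv_form_mono hP hQ h x).trans (dot_le_norm _ x)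

lemma sNorm_nonneg {p q : ℕ} (M : Matrix (Fin p) (Fin q) ℝ) : 0 ≤ sNorm M := norm_nonneg _

lemma sNorm_mul_le {p q r : ℕ} (A : Matrix (Fin p) (Fin q) ℝ) (B : Matrix (Fin q) (Fin r) ℝ) :
    sNorm (A * B) ≤ sNorm A * sNorm B := by
  rw [sNorm_eq, sNorm_eq, sNorm_eq]; exact l2_opNorm_mul A B

lemma sNorm_transpose {p q : ℕ} (M : Matrix (Fin p) (Fin q) ℝ) : sNorm Mᵀ = sNorm M := by
  rw [sNorm_eq, sNorm_eq, ← ct_eq]; exact l2_opNorm_conjTranspose M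

lemma sNorm_add_le {p q : ℕ} (A B : Matrix (Fin p) (Fin q) ℝ) :
    sNorm (A + B) ≤ sNorm A + sNorm B := by
  rw [sNorm_eq, sNorm_eq, sNorm_eq]; exact norm_add_le A B

lemma sNorm_sub_rev {p q : ℕ} (A B : Matrix (Fin p) (Fin q) ℝ) :
    sNorm (A - B) = sNorm (B - A) := by
  rw [sNorm_eq, sNorm_eq]; exact norm_sub_rev A B

lemma sNorm_smul {p q : ℕ} (c : ℝ) (hc : 0 ≤ c) (A : Matrix (Fin p) (Fin q) ℝ) :
    sNorm (c • A) = c * sNorm A := by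
  rw [sNorm_eq, sNorm_eq, norm_smul, Real.norm_eq_abs, abs_of_nonneg hc]

lemma smul_psd {k : ℕ} {M : Matrix (Fin k) (Fin k) ℝ} (hM : M.PosSemidef) {c : ℝ} (hc : 0 ≤ c) :
    (c • M).PosSemidef := by
  refine PosSemidef.of_dotProduct_mulVec_nonneg ?_ fun x => ?_
  · have := hM.isHermitian
    unfold Matrix.IsHermitian at this ⊢
    rw [conjTranspose_smul, this, star_trivial]
  · rw [smul_mulVec, dotProduct_smul, smul_eq_mul]
    exact mul_nonneg hc (hM.dotProduct_mulVec_nonneg x)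

theorem stmt4 {n m : ℕ} (Rh : Matrix (Fin m) (Fin m) ℝ) (Dh Bh : Matrix (Fin n) (Fin m) ℝ)
    (P₁ P₂ Pi : Matrix (Fin n) (Fin n) ℝ) (τ : ℝ)
    (hR : Rh.PosDef) (hP₁ : P₁.PosSemidef) (hP₂ : P₂.PosSemidef) (hPi : Pi.PosSemidef)
    (hτ : 0 ≤ τ) :
    (Rh + Dhᵀ * P₁ * Dh).PosDef ∧ (Rh + Dhᵀ * P₂ * Dh + τ • (Bhᵀ * Pi * Bh)).PosDef ∧
    sNorm ((Rh + Dhᵀ * P₁ * Dh)⁻¹ - (Rh + Dhᵀ * P₂ * Dh + τ • (Bhᵀ * Pi * Bh))⁻¹) ≤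
      sNorm Rh⁻¹ ^ 2 * (sNorm Dh ^ 2 * sNorm (P₁ - P₂) + τ * sNorm Bh ^ 2 * sNorm Pi) := by
  have hX₁ : (Dhᵀ * P₁ * Dh).PosSemidef := by
    have := hP₁.conjTranspose_mul_mul_same Dh; rwa [ct_eq] at this
  have hX₂ : (Dhᵀ * P₂ * Dh).PosSemidef := by
    have := hP₂.conjTranspose_mul_mul_same Dh; rwa [ct_eq] at this
  have hXτ : (τ • (Bhᵀ * Pi * Bh)).PosSemidef := by
    refine smul_psd ?_ hτ
    have := hPi.conjTranspose_mul_mul_same Bh; rwa [ct_eq] at this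
  set A := Rh + Dhᵀ * P₁ * Dh with hA_def
  set B := Rh + Dhᵀ * P₂ * Dh + τ • (Bhᵀ * Pi * Bh) with hB_def
  have hA : A.PosDef := hR.add_posSemidef hX₁
  have hB : B.PosDef := (hR.add_posSemidef hX₂).add_posSemidef hXτ
  refine ⟨hA, hB, ?_⟩
  have hAdet : IsUnit A.det := (Matrix.isUnit_iff_isUnit_det A).mp hA.isUnit
  have hBdet : IsUnit B.det := (Matrix.isUnit_iff_isUnit_det B).mp hB.isUnit
  have Einv : A⁻¹ - B⁻¹ = A⁻¹ * (B - A) * B⁻¹ := by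
    rw [Matrix.mul_sub, Matrix.sub_mul, mul_assoc, Matrix.mul_nonsing_inv _ hBdet, mul_one,
      Matrix.nonsing_inv_mul _ hAdet, one_mul]
  have hBA : B - A = Dhᵀ * (P₂ - P₁) * Dh + τ • (Bhᵀ * Pi * Bh) := by
    rw [Matrix.mul_sub, Matrix.sub_mul, hA_def, hB_def]; abel
  -- bound on ‖B - A‖
  have hd : sNorm (B - A) ≤ sNorm Dh ^ 2 * sNorm (P₁ - P₂) + τ * sNorm Bh ^ 2 * sNorm Pi := by
    rw [hBA]
    refine (sNorm_add_le _ _).trans ?_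
    have h1 : sNorm (Dhᵀ * (P₂ - P₁) * Dh) ≤ sNorm Dh ^ 2 * sNorm (P₁ - P₂) := by
      calc sNorm (Dhᵀ * (P₂ - P₁) * Dh) ≤ sNorm (Dhᵀ * (P₂ - P₁)) * sNorm Dh :=
            sNorm_mul_le _ _
        _ ≤ (sNorm Dhᵀ * sNorm (P₂ - P₁)) * sNorm Dh :=
            mul_le_mul_of_nonneg_right (sNorm_mul_le _ _) (sNorm_nonneg _)
        _ = sNorm Dh ^ 2 * sNorm (P₁ - P₂) := by
            rw [sNorm_transpose, sNorm_sub_rev P₂ P₁]; ring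
    have h2 : sNorm (τ • (Bhᵀ * Pi * Bh)) ≤ τ * sNorm Bh ^ 2 * sNorm Pi := by
      rw [sNorm_smul τ hτ]
      have : sNorm (Bhᵀ * Pi * Bh) ≤ sNorm Bh ^ 2 * sNorm Pi := by
        calc sNorm (Bhᵀ * Pi * Bh) ≤ sNorm (Bhᵀ * Pi) * sNorm Bh := sNorm_mul_le _ _
          _ ≤ (sNorm Bhᵀ * sNorm Pi) * sNorm Bh :=
              mul_le_mul_of_nonneg_right (sNorm_mul_le _ _) (sNorm_nonneg _)
          _ = sNorm Bh ^ 2 * sNorm Pi := by rw [sNorm_transpose]; ring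
      calc τ * sNorm (Bhᵀ * Pi * Bh) ≤ τ * (sNorm Bh ^ 2 * sNorm Pi) :=
            mul_le_mul_of_nonneg_left this hτ
        _ = τ * sNorm Bh ^ 2 * sNorm Pi := by ring
    linarith [h1, h2]
  -- bounds on inverses
  have hRA : ∀ x, x ⬝ᵥ Rh *ᵥ x ≤ x ⬝ᵥ A *ᵥ x := by
    intro x
    rw [hA_def, add_mulVec, dotProduct_add]
    linarith [dot_nonneg hX₁ x]
  have hRB : ∀ x, x ⬝ᵥ Rh *ᵥ x ≤ x ⬝ᵥ B *ᵥ x := by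
    intro x
    rw [hB_def, add_mulVec, add_mulVec, dotProduct_add, dotProduct_add]
    linarith [dot_nonneg hX₂ x, dot_nonneg hXτ x]
  have hAi : sNorm A⁻¹ ≤ sNorm Rh⁻¹ := inv_norm_le hR hA hRA
  have hBi : sNorm B⁻¹ ≤ sNorm Rh⁻¹ := inv_norm_le hR hB hRB
  set d := sNorm Dh ^ 2 * sNorm (P₁ - P₂) + τ * sNorm Bh ^ 2 * sNorm Pi with hd_def
  have hdnn : 0 ≤ d := le_trans (sNorm_nonneg _) hd
  calc sNorm (A⁻¹ - B⁻¹) = sNorm (A⁻¹ * (B - A) * B⁻¹) := by rw [Einv]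
    _ ≤ sNorm (A⁻¹ * (B - A)) * sNorm B⁻¹ := sNorm_mul_le _ _
    _ ≤ (sNorm A⁻¹ * sNorm (B - A)) * sNorm B⁻¹ :=
        mul_le_mul_of_nonneg_right (sNorm_mul_le _ _) (sNorm_nonneg _)
    _ ≤ (sNorm Rh⁻¹ * d) * sNorm Rh⁻¹ := by
        refine mul_le_mul ?_ hBi (sNorm_nonneg _) ?_
        · exact mul_le_mul hAi hd (sNorm_nonneg _) ((sNorm_nonneg _).trans hAi)
        · exact mul_nonneg ((sNorm_nonneg _).trans hAi) hdnn
    _ = sNorm Rh⁻¹ ^ 2 * d := by ring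
end

section
/- Let 0 ≤ t₀ < T. Let Ã, Q̃ : [t₀,T] → ℝ^{n×n} and R̃ : [t₀,T] → ℝ^{m×m} be continuous with Q̃(s) symmetric positive semidefinite and R̃(s) symmetric positive definite for every s, let B̃ ∈ ℝ^{n×m}, and let G̃ be symmetric positive semidefinite. Suppose Π : [t₀,T] → ℝ^{n×n} is continuously differentiable with symmetric values, Π(T) = G̃, and Π′ + ΠÃ + ÃᵀΠ + Q̃ − ΠB̃R̃⁻¹B̃ᵀΠ = 0 on [t₀,T]. Then for every continuous control u : [t₀,T] → ℝ^m and every continuously differentiable x : [t₀,T] → ℝⁿ with x′(s) = Ã(s)x(s) + B̃u(s) and x(t₀) = x₀, one has ∫_{t₀}^T ( x(s)ᵀQ̃(s)x(s) + u(s)ᵀR̃(s)u(s) ) ds + x(T)ᵀG̃x(T) ≥ x₀ᵀΠ(t₀)x₀, and equality holds if u(s) = −R̃(s)⁻¹B̃ᵀΠ(s)x(s) for all s ∈ [t₀,T]. -/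
open Matrix Set

lemma dot_hasDerivAt {ι : Type*} [Fintype ι] {a b : ℝ → ι → ℝ} {a' b' : ι → ℝ} {s : ℝ}
    (ha : ∀ i, HasDerivAt (fun r => a r i) (a' i) s)
    (hb : ∀ i, HasDerivAt (fun r => b r i) (b' i) s) :
    HasDerivAt (fun r => a r ⬝ᵥ b r) (a' ⬝ᵥ b s + a s ⬝ᵥ b') s := by
  have h : HasDerivAt (fun r => ∑ i, a r i * b r i)
      (∑ i : ι, (a' i * b s i + a s i * b' i)) s :=
    HasDerivAt.fun_sum fun i _ => (ha i).mul (hb i)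
  simpa [dotProduct, Finset.sum_add_distrib] using h

lemma dot_contOn {ι : Type*} [Fintype ι] {a b : ℝ → ι → ℝ} {S : Set ℝ}
    (ha : ∀ i, ContinuousOn (fun s => a s i) S)
    (hb : ∀ i, ContinuousOn (fun s => b s i) S) :
    ContinuousOn (fun s => a s ⬝ᵥ b s) S := by
  simp only [dotProduct]
  exact continuousOn_finset_sum _ fun i _ => (ha i).mul (hb i)

lemma mv_dot {ι κ : Type*} [Fintype ι] [Fintype κ] (M : Matrix ι κ ℝ) (a : κ → ℝ) (b : ι → ℝ) :
    (M *ᵥ a) ⬝ᵥ b = a ⬝ᵥ (Mᵀ *ᵥ b) := by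
  rw [dotProduct_comm, dotProduct_mulVec, mulVec_transpose, dotProduct_comm]

lemma mulVec_contOn {ι κ : Type*} [Fintype κ] {M : ℝ → Matrix ι κ ℝ} {v : ℝ → κ → ℝ}
    {S : Set ℝ} (hM : ∀ i j, ContinuousOn (fun s => M s i j) S)
    (hv : ∀ j, ContinuousOn (fun s => v s j) S) (i : ι) :
    ContinuousOn (fun s => (M s *ᵥ v s) i) S :=
  dot_contOn (fun j => hM i j) hv

lemma mulVec_hasDerivAt {ι κ : Type*} [Fintype κ] {M : ℝ → Matrix ι κ ℝ}
    {M' : Matrix ι κ ℝ} {v : ℝ → κ → ℝ} {v' : κ → ℝ} {s : ℝ}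
    (hM : ∀ i j, HasDerivAt (fun r => M r i j) (M' i j) s)
    (hv : ∀ j, HasDerivAt (fun r => v r j) (v' j) s) (i : ι) :
    HasDerivAt (fun r => (M r *ᵥ v r) i) ((M' *ᵥ v s + M s *ᵥ v') i) s := by
  have h := dot_hasDerivAt (a := fun r => M r i) (b := v) (a' := M' i) (b' := v')
    (fun j => hM i j) hv
  exact h

set_option maxHeartbeats 2000000 in
theorem stmt9 {n m : ℕ} (t₀ T : ℝ) (ht₀ : 0 ≤ t₀) (hT : t₀ < T)
    (At Qt : ℝ → Matrix (Fin n) (Fin n) ℝ) (Rt : ℝ → Matrix (Fin m) (Fin m) ℝ)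
    (Bt : Matrix (Fin n) (Fin m) ℝ) (Gt : Matrix (Fin n) (Fin n) ℝ)
    (hAc : ∀ i j, ContinuousOn (fun s => At s i j) (Icc t₀ T))
    (hQc : ∀ i j, ContinuousOn (fun s => Qt s i j) (Icc t₀ T))
    (hRc : ∀ i j, ContinuousOn (fun s => Rt s i j) (Icc t₀ T))
    (hQ : ∀ s ∈ Icc t₀ T, (Qt s).PosSemidef)
    (hR : ∀ s ∈ Icc t₀ T, (Rt s).PosDef)
    (hG : Gt.PosSemidef)
    (Pi Pi' : ℝ → Matrix (Fin n) (Fin n) ℝ)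
    (hPider : ∀ i j, ∀ s ∈ Icc t₀ T, HasDerivAt (fun r => Pi r i j) (Pi' s i j) s)
    (hPic : ∀ i j, ContinuousOn (fun s => Pi' s i j) (Icc t₀ T))
    (hPisymm : ∀ s ∈ Icc t₀ T, (Pi s).IsHermitian)
    (hPiT : Pi T = Gt)
    (hRic : ∀ s ∈ Icc t₀ T,
      Pi' s + Pi s * At s + (At s)ᵀ * Pi s + Qt s
        - Pi s * Bt * (Rt s)⁻¹ * Btᵀ * Pi s = 0)
    (u : ℝ → Fin m → ℝ) (hu : ∀ i, ContinuousOn (fun s => u s i) (Icc t₀ T))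
    (x : ℝ → Fin n → ℝ) (x₀ : Fin n → ℝ) (hx0 : x t₀ = x₀)
    (hxder : ∀ i, ∀ s ∈ Icc t₀ T,
      HasDerivAt (fun r => x r i) ((At s *ᵥ x s + Bt *ᵥ u s) i) s) :
    (∫ s in t₀..T, (x s ⬝ᵥ (Qt s *ᵥ x s) + u s ⬝ᵥ (Rt s *ᵥ u s))) + x T ⬝ᵥ (Gt *ᵥ x T)
        ≥ x₀ ⬝ᵥ (Pi t₀ *ᵥ x₀) ∧
    ((∀ s ∈ Icc t₀ T, u s = -(((Rt s)⁻¹ * Btᵀ * Pi s) *ᵥ x s)) →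
      (∫ s in t₀..T, (x s ⬝ᵥ (Qt s *ᵥ x s) + u s ⬝ᵥ (Rt s *ᵥ u s))) + x T ⬝ᵥ (Gt *ᵥ x T)
        = x₀ ⬝ᵥ (Pi t₀ *ᵥ x₀)) := by
  have hTle : t₀ ≤ T := hT.le
  -- continuity of entries
  have hxc : ∀ i, ContinuousOn (fun s => x s i) (Icc t₀ T) :=
    fun i s hs => (hxder i s hs).continuousAt.continuousWithinAt
  have hPc : ∀ i j, ContinuousOn (fun s => Pi s i j) (Icc t₀ T) :=
    fun i j s hs => (hPider i j s hs).continuousAt.continuousWithinAt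
  have hx'c : ∀ i, ContinuousOn (fun s => (At s *ᵥ x s + Bt *ᵥ u s) i) (Icc t₀ T) := by
    intro i
    simp only [_root_.Pi.add_apply]
    exact (mulVec_contOn hAc hxc i).add (mulVec_contOn (M := fun _ => Bt) (fun _ _ => continuousOn_const) hu i)
  -- the derivative of the value function
  set F' : ℝ → ℝ := fun s => (At s *ᵥ x s + Bt *ᵥ u s) ⬝ᵥ (Pi s *ᵥ x s)
      + x s ⬝ᵥ (Pi' s *ᵥ x s + Pi s *ᵥ (At s *ᵥ x s + Bt *ᵥ u s)) with hF'def
  set L : ℝ → ℝ := fun s => x s ⬝ᵥ (Qt s *ᵥ x s) + u s ⬝ᵥ (Rt s *ᵥ u s) with hLdef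
  have hfd : ∀ s ∈ Icc t₀ T, HasDerivAt (fun r => x r ⬝ᵥ (Pi r *ᵥ x r)) (F' s) s := by
    intro s hs
    exact dot_hasDerivAt (fun i => hxder i s hs)
      (fun i => mulVec_hasDerivAt (fun i j => hPider i j s hs) (fun i => hxder i s hs) i)
  have hF'c : ContinuousOn F' (Icc t₀ T) := by
    apply (dot_contOn hx'c (mulVec_contOn hPc hxc)).add
    apply dot_contOn hxc
    intro i
    simp only [_root_.Pi.add_apply]
    exact (mulVec_contOn hPic hxc i).add (mulVec_contOn hPc hx'c i)
  have hLc : ContinuousOn L (Icc t₀ T) :=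
    (dot_contOn hxc (mulVec_contOn hQc hxc)).add (dot_contOn hu (mulVec_contOn hRc hu))
  have hLint : IntervalIntegrable L MeasureTheory.volume t₀ T :=
    ContinuousOn.intervalIntegrable_of_Icc hTle hLc
  have hF'int : IntervalIntegrable F' MeasureTheory.volume t₀ T :=
    ContinuousOn.intervalIntegrable_of_Icc hTle hF'c
  have hFTC : ∫ s in t₀..T, F' s = x T ⬝ᵥ (Pi T *ᵥ x T) - x t₀ ⬝ᵥ (Pi t₀ *ᵥ x t₀) :=
    intervalIntegral.integral_eq_sub_of_hasDerivAt
      (fun s hs => hfd s (by rwa [uIcc_of_le hTle] at hs)) hF'int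
  -- key pointwise identity
  have hkey : ∀ s ∈ Icc t₀ T, L s + F' s
      = (u s + ((Rt s)⁻¹ * Btᵀ * Pi s) *ᵥ x s)
          ⬝ᵥ (Rt s *ᵥ (u s + ((Rt s)⁻¹ * Btᵀ * Pi s) *ᵥ x s)) := by
    intro s hs
    have hRH : (Rt s)ᵀ = Rt s := by
      have h : (Rt s)ᴴ = Rt s := (hR s hs).1
      rwa [conjTranspose_eq_transpose_of_trivial] at h
    have hPH : (Pi s)ᵀ = Pi s := by
      have h : (Pi s)ᴴ = Pi s := hPisymm s hs
      rwa [conjTranspose_eq_transpose_of_trivial] at h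
    have hdet : IsUnit (Rt s).det := isUnit_iff_ne_zero.mpr (hR s hs).det_pos.ne'
    have hRR : Rt s * (Rt s)⁻¹ = 1 := mul_nonsing_inv _ hdet
    have hRR' : (Rt s)⁻¹ * Rt s = 1 := nonsing_inv_mul _ hdet
    have hRiT : ((Rt s)⁻¹)ᵀ = (Rt s)⁻¹ := by rw [transpose_nonsing_inv, hRH]
    have e1 : ∀ Z : Matrix (Fin m) (Fin n) ℝ, Rt s * ((Rt s)⁻¹ * Z) = Z := by
      intro Z; rw [← Matrix.mul_assoc, hRR, Matrix.one_mul]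
    have hPi'eq : Pi' s
        = Pi s * Bt * (Rt s)⁻¹ * Btᵀ * Pi s - Pi s * At s - (At s)ᵀ * Pi s - Qt s := by
      have h := hRic s hs
      rw [← sub_eq_zero, ← h]; abel
    simp only [hLdef, hF'def, hPi'eq]
    simp only [mulVec_add, add_mulVec, sub_mulVec, mulVec_mulVec, dotProduct_add,
      add_dotProduct, dotProduct_sub, sub_dotProduct, mv_dot, transpose_mul,
      transpose_transpose, hPH, hRiT, e1, hRR', Matrix.mul_assoc, Matrix.mul_one,
      Matrix.one_mul]
    ring
  have hnn : 0 ≤ ∫ s in t₀..T, (L s + F' s) := by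
    apply intervalIntegral.integral_nonneg hTle
    intro s hs
    rw [hkey s hs]
    have h := (hR s hs).posSemidef.dotProduct_mulVec_nonneg (u s + ((Rt s)⁻¹ * Btᵀ * Pi s) *ᵥ x s)
    simpa using h
  have hadd : ∫ s in t₀..T, (L s + F' s)
      = (∫ s in t₀..T, L s) + ∫ s in t₀..T, F' s :=
    intervalIntegral.integral_add hLint hF'int
  have hfT : x T ⬝ᵥ (Pi T *ᵥ x T) = x T ⬝ᵥ (Gt *ᵥ x T) := by rw [hPiT]
  have hf0 : x t₀ ⬝ᵥ (Pi t₀ *ᵥ x t₀) = x₀ ⬝ᵥ (Pi t₀ *ᵥ x₀) := by rw [hx0]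
  constructor
  · have : (∫ s in t₀..T, L s) + x T ⬝ᵥ (Gt *ᵥ x T) - x₀ ⬝ᵥ (Pi t₀ *ᵥ x₀)
        = ∫ s in t₀..T, (L s + F' s) := by
      rw [hadd, hFTC, hfT, hf0]; ring
    have := this ▸ hnn
    simp only [hLdef] at this ⊢
    linarith
  · intro hopt
    have hw0 : ∀ s ∈ Icc t₀ T, u s + ((Rt s)⁻¹ * Btᵀ * Pi s) *ᵥ x s = 0 := by
      intro s hs; rw [hopt s hs]; simp
    have hz : ∫ s in t₀..T, (L s + F' s) = 0 := by
      rw [intervalIntegral.integral_congr (g := fun _ => (0 : ℝ))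
        (fun s hs => by
          rw [uIcc_of_le hTle] at hs
          simp only
          rw [hkey s hs, hw0 s hs]
          simp)]
      simp
    have : (∫ s in t₀..T, L s) + x T ⬝ᵥ (Gt *ᵥ x T) - x₀ ⬝ᵥ (Pi t₀ *ᵥ x₀)
        = ∫ s in t₀..T, (L s + F' s) := by
      rw [hadd, hFTC, hfT, hf0]; ring
    rw [hz] at this
    simp only [hLdef] at this ⊢
    linarith
end

section
/- Let τ > 0, N ∈ ℕ₊, and let A, C, Q, G ∈ ℝ^{n×n} and B, D ∈ ℝ^{n×m} and R ∈ ℝ^{m×m}, with Q, G symmetric positive semidefinite and R symmetric positive definite. Define P_N = G and, backwards for k = N−1,…,0, W_k = R + τBᵀP_{k+1}B + DᵀP_{k+1}D, H_k = BᵀP_{k+1}(I + τA) + DᵀP_{k+1}C, P_k = τQ + (I + τA)ᵀP_{k+1}(I + τA) + τCᵀP_{k+1}C − τH_kᵀW_k⁻¹H_k. Then for every k the matrix W_k is positive definite, the matrix P_k is symmetric positive semidefinite, and with K_k = W_k⁻¹H_k the completion-of-squares identity P_k = τQ + τK_kᵀRK_k + (I + τA − τBK_k)ᵀP_{k+1}(I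 + τA − τBK_k) + τ(C − DK_k)ᵀP_{k+1}(C − DK_k) holds. -/
open Matrix

lemma psd_smul18 {ι : Type*} [Fintype ι] {c : ℝ} (hc : 0 ≤ c)
    {M : Matrix ι ι ℝ} (h : M.PosSemidef) : (c • M).PosSemidef := by
  refine ⟨?_, fun x => ?_⟩
  · unfold Matrix.IsHermitian
    rw [conjTranspose_smul, h.isHermitian.eq]
    simp
  · exact (h.smul hc).2 x

lemma psd_conj18 {k l : ℕ} {M : Matrix (Fin k) (Fin k) ℝ} (h : M.PosSemidef)
    (X : Matrix (Fin k) (Fin l) ℝ) : (Xᵀ * M * X).PosSemidef := by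
  have := h.conjTranspose_mul_mul_same X
  rwa [conjTranspose_eq_transpose_of_trivial] at this

lemma stepAux18 {n m : ℕ} {τ : ℝ} (hτ : 0 < τ)
    (A Cm Q : Matrix (Fin n) (Fin n) ℝ) (B D : Matrix (Fin n) (Fin m) ℝ)
    (R : Matrix (Fin m) (Fin m) ℝ) (hQ : Q.PosSemidef) (hR : R.PosDef)
    (P1 : Matrix (Fin n) (Fin n) ℝ) (hP1 : P1.PosSemidef)
    (W1 : Matrix (Fin m) (Fin m) ℝ) (H1 K1 : Matrix (Fin m) (Fin n) ℝ)
    (P0 : Matrix (Fin n) (Fin n) ℝ)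
    (hW1 : W1 = R + τ • (Bᵀ * P1 * B) + Dᵀ * P1 * D)
    (hH1 : H1 = Bᵀ * P1 * (1 + τ • A) + Dᵀ * P1 * Cm)
    (hP0 : P0 = τ • Q + (1 + τ • A)ᵀ * P1 * (1 + τ • A) + τ • (Cmᵀ * P1 * Cm)
        - τ • (H1ᵀ * W1⁻¹ * H1))
    (hK1 : K1 = W1⁻¹ * H1) :
    W1.PosDef ∧ P0.PosSemidef ∧
    P0 = τ • Q + τ • (K1ᵀ * R * K1)
      + (1 + τ • A - τ • (B * K1))ᵀ * P1 * (1 + τ • A - τ • (B * K1))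
      + τ • ((Cm - D * K1)ᵀ * P1 * (Cm - D * K1)) := by
  have hsym : P1ᵀ = P1 := (conjTranspose_eq_transpose_of_trivial P1) ▸ hP1.isHermitian
  have hWpd : W1.PosDef := by
    rw [hW1]
    exact (hR.add_posSemidef (psd_smul18 hτ.le (psd_conj18 hP1 B))).add_posSemidef
      (psd_conj18 hP1 D)
  have hWdet : IsUnit W1.det := hWpd.det_pos.ne'.isUnit
  have key : W1 * K1 = H1 := by
    rw [hK1, Matrix.mul_nonsing_inv_cancel_left _ _ hWdet]
  rw [hW1, hH1] at key
  have hid : P0 = τ • Q + τ • (K1ᵀ * R * K1)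
      + (1 + τ • A - τ • (B * K1))ᵀ * P1 * (1 + τ • A - τ • (B * K1))
      + τ • ((Cm - D * K1)ᵀ * P1 * (Cm - D * K1)) := by
    rw [hP0, Matrix.mul_assoc (H1ᵀ), ← hK1, hH1]
    have h0 : τ • (K1ᵀ * (Bᵀ * P1 * (1 + τ • A) + Dᵀ * P1 * Cm
        - (R + τ • (Bᵀ * P1 * B) + Dᵀ * P1 * D) * K1)) = 0 := by
      rw [← key, sub_self, Matrix.mul_zero, smul_zero]
    rw [← sub_eq_zero, ← h0]
    simp only [Matrix.add_mul, Matrix.mul_add, Matrix.sub_mul, Matrix.mul_sub,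
      Matrix.transpose_add, Matrix.transpose_sub, Matrix.transpose_smul,
      Matrix.transpose_mul, Matrix.transpose_transpose, Matrix.transpose_one,
      Matrix.smul_mul, Matrix.mul_smul, Matrix.mul_assoc, Matrix.mul_one,
      Matrix.one_mul, hsym, smul_add, smul_sub, smul_smul]
    module
  refine ⟨hWpd, ?_, hid⟩
  rw [hid]
  exact (((psd_smul18 hτ.le hQ).add (psd_smul18 hτ.le (psd_conj18 hR.posSemidef K1))).add
      (psd_conj18 hP1 _)).add (psd_smul18 hτ.le (psd_conj18 hP1 _))
theorem stmt18 {n m : ℕ} (τ : ℝ) (hτ : 0 < τ) (N : ℕ) (hN : 0 < N)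
    (A Cm Q G : Matrix (Fin n) (Fin n) ℝ) (B D : Matrix (Fin n) (Fin m) ℝ)
    (R : Matrix (Fin m) (Fin m) ℝ)
    (hQ : Q.PosSemidef) (hG : G.PosSemidef) (hR : R.PosDef)
    (P : ℕ → Matrix (Fin n) (Fin n) ℝ) (W : ℕ → Matrix (Fin m) (Fin m) ℝ)
    (H K : ℕ → Matrix (Fin m) (Fin n) ℝ)
    (hW : ∀ k < N, W k = R + τ • (Bᵀ * P (k + 1) * B) + Dᵀ * P (k + 1) * D)
    (hH : ∀ k < N, H k = Bᵀ * P (k + 1) * (1 + τ • A) + Dᵀ * P (k + 1) * Cm)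
    (hPN : P N = G)
    (hP : ∀ k < N, P k = τ • Q + (1 + τ • A)ᵀ * P (k + 1) * (1 + τ • A)
        + τ • (Cmᵀ * P (k + 1) * Cm) - τ • ((H k)ᵀ * (W k)⁻¹ * H k))
    (hK : ∀ k < N, K k = (W k)⁻¹ * H k) :
    (∀ k < N, (W k).PosDef) ∧ (∀ k ≤ N, (P k).PosSemidef) ∧
    (∀ k < N, P k = τ • Q + τ • ((K k)ᵀ * R * K k)
        + (1 + τ • A - τ • (B * K k))ᵀ * P (k + 1) * (1 + τ • A - τ • (B * K k))
        + τ • ((Cm - D * K k)ᵀ * P (k + 1) * (Cm - D * K k))) := by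
  have psd : ∀ j : ℕ, (P (N - j)).PosSemidef := by
    intro j
    induction j with
    | zero => simpa [hPN] using hG
    | succ j ih =>
      by_cases hj : j < N
      · have hk : N - (j + 1) < N := by omega
        have hsucc : N - (j + 1) + 1 = N - j := by omega
        have ih' : (P (N - (j + 1) + 1)).PosSemidef := by rwa [hsucc]
        exact (stepAux18 hτ A Cm Q B D R hQ hR _ ih' _ _ _ _
          (hW _ hk) (hH _ hk) (hP _ hk) (hK _ hk)).2.1
      · have h : N - (j + 1) = N - j := by omega
        rw [h]; exact ih
  have psd' : ∀ k ≤ N, (P k).PosSemidef := by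
    intro k hk
    have := psd (N - k)
    rwa [Nat.sub_sub_self hk] at this
  refine ⟨fun k hk => ?_, psd', fun k hk => ?_⟩
  · exact (stepAux18 hτ A Cm Q B D R hQ hR _ (psd' (k + 1) (by omega)) _ _ _ _
      (hW _ hk) (hH _ hk) (hP _ hk) (hK _ hk)).1
  · exact (stepAux18 hτ A Cm Q B D R hQ hR _ (psd' (k + 1) (by omega)) _ _ _ _
      (hW _ hk) (hH _ hk) (hP _ hk) (hK _ hk)).2.2
end
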